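/- Let H be a complex separable Hilbert space and C : H → H an antilinear map. Then C is a conjugation if and only if there exists an orthonormal basis {f_n}_{n∈Λ} of H such that for every orthonormal basis {τ_n}_{n∈Λ} of H and every x = Σ_n a_n τ_n ∈ H one has C x = Σ_m ( Σ_n conj(a_n) · c_{n,m}^{(τ)} ) τ_m, where c_{n,m}^{(τ)} = Σ_k ⟨f_k, τ_n⟩ · ⟨f_k, τ_m⟩ for all m, n ∈ Λ (all series converging). Equivalently, ⟨C τ_n, τ_m⟩ = c_{n,m}^{(τ)} for all m, n ∈ Λ and every orthonormal basis {τ_n}. -/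

import Mathlib

noncomputable section
open scoped ComplexConjugate

/-- A conjugation on a complex Hilbert space: an antilinear, involutive, isometric map. -/
def IsConjugation {E : Type*} [NormedAddCommGroup E] [InnerProductSpace ℂ E] (C : E → E) : Prop :=
  (∀ (a : ℂ) (f g : E), C (a • f + g) = conj a • C f + C g) ∧
  (∀ f, C (C f) = f) ∧
  (∀ f, ‖C f‖ = ‖f‖)

/-- The inner product in the paper's convention: linear in the first argument and
conjugate-linear in the second (Mathlib's `inner` with the arguments swapped). -/
def ip {E : Type*} [NormedAddCommGroup E] [InnerProductSpace ℂ E] (x y : E) : ℂ :=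
  inner ℂ y x

/-!
A conjugation `C` fixes every vector of some Hilbert basis `f`: by Zorn, take a maximal
orthonormal family of fixed vectors; it is complete, since a nonzero `x` orthogonal to it gives
the nonzero fixed vector `x + C x` or `i • x`, still orthogonal to it because
`⟪C x, C y⟫ = ⟪y, x⟫`. The same identity shows that such a `C` conjugates the coordinates in the
basis `f`, and the matrix coefficients of that map in any basis `τ` are the `c_{n,m}^{(τ)}`.
Conversely, all Hilbert bases of a separable space are equinumerous, so every unit vector lies in
a Hilbert basis indexed by `Λ`; an antilinear map with the right matrix coefficients in all of
them therefore agrees with the coordinate conjugation on unit vectors, hence everywhere.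
-/

open Submodule Set
open scoped InnerProductSpace

section Orthonormal

variable {𝕜 E : Type*} [RCLike 𝕜] [NormedAddCommGroup E] [InnerProductSpace 𝕜 E]

theorem Orthonormal.countable [TopologicalSpace.SeparableSpace E] {ι : Type*} {v : ι → E}
    (hv : Orthonormal 𝕜 v) : Countable ι := by
  refine Pairwise.countable_of_isOpen_disjoint (s := fun i => Metric.ball (v i) (1 / 2))
    (fun i j hij => Metric.ball_disjoint_ball ?_) (fun _ => Metric.isOpen_ball)
    (fun i => ⟨v i, Metric.mem_ball_self one_half_pos⟩)
  have hsq : ‖v i - v j‖ ^ 2 = 2 := by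
    rw [@norm_sub_sq 𝕜, hv.2 hij, hv.1 i, hv.1 j]
    norm_num
  rw [dist_eq_norm]
  nlinarith [norm_nonneg (v i - v j)]

theorem orthonormal_insert {s : Set E} (hs : Orthonormal 𝕜 ((↑) : s → E)) {w : E}
    (hw : ‖w‖ = 1) (hws : ∀ e ∈ s, ⟪e, w⟫_𝕜 = 0) :
    Orthonormal 𝕜 ((↑) : ↥(insert w s) → E) := by
  classical
  have hw_notMem : w ∉ s := fun h => by simpa [hw] using hws w h
  rw [orthonormal_subtype_iff_ite]
  rintro x (rfl | hx) y (rfl | hy)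
  · simp [hw]
  · rw [if_neg (ne_of_mem_of_not_mem hy hw_notMem).symm, inner_eq_zero_symm, hws y hy]
  · rw [if_neg (ne_of_mem_of_not_mem hx hw_notMem), hws x hx]
  · exact orthonormal_subtype_iff_ite.mp hs x hx y hy

theorem Submodule.mem_orthogonal_span_iff {s : Set E} {x : E} :
    x ∈ (span 𝕜 s)ᗮ ↔ ∀ e ∈ s, ⟪e, x⟫_𝕜 = 0 := by
  rw [← span_singleton_le_iff_mem, ← isOrtho_iff_le, isOrtho_comm, isOrtho_span]
  simp

end Orthonormal

namespace HilbertBasis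

variable {𝕜 E ι ι' : Type*} [RCLike 𝕜] [NormedAddCommGroup E] [InnerProductSpace 𝕜 E]

theorem span_range_eq_top (b : HilbertBasis ι 𝕜 E)
    [FiniteDimensional 𝕜 (span 𝕜 (range b))] : span 𝕜 (range b) = ⊤ := by
  simpa using b.dense_span

theorem infinite_of_not_finiteDimensional (b : HilbertBasis ι 𝕜 E)
    (hE : ¬FiniteDimensional 𝕜 E) : Infinite ι := by
  refine not_finite_iff_infinite.mp fun hι => hE ?_
  have := FiniteDimensional.span_of_finite 𝕜 (finite_range b)
  have : FiniteDimensional 𝕜 (⊤ : Submodule 𝕜 E) := b.span_range_eq_top ▸ this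
  exact Module.Finite.equiv Submodule.topEquiv

theorem nonempty_equiv [TopologicalSpace.SeparableSpace E] (b : HilbertBasis ι 𝕜 E)
    (b' : HilbertBasis ι' 𝕜 E) : Nonempty (ι ≃ ι') := by
  by_cases hE : FiniteDimensional 𝕜 E
  · exact ⟨(Module.Basis.mk b.orthonormal.linearIndependent b.span_range_eq_top.ge).indexEquiv
      (Module.Basis.mk b'.orthonormal.linearIndependent b'.span_range_eq_top.ge)⟩
  · have := b.orthonormal.countable
    have := b'.orthonormal.countable
    have := b.infinite_of_not_finiteDimensional hE
    have := b'.infinite_of_not_finiteDimensional hE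
    exact nonempty_equiv_of_countable

theorem exists_range_eq [CompleteSpace E] [TopologicalSpace.SeparableSpace E]
    (b₀ : HilbertBasis ι' 𝕜 E) (b : HilbertBasis ι 𝕜 E) :
    ∃ τ : HilbertBasis ι' 𝕜 E, range τ = range b := by
  obtain ⟨e⟩ := b.nonempty_equiv b₀
  have hrange : range (b ∘ e.symm) = range b := e.symm.surjective.range_comp b
  refine ⟨HilbertBasis.mk (b.orthonormal.comp e.symm e.symm.injective)
    (hrange ▸ b.dense_span.ge), ?_⟩
  rw [HilbertBasis.coe_mk, hrange]

theorem exists_apply_eq [CompleteSpace E] [TopologicalSpace.SeparableSpace E]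
    (b₀ : HilbertBasis ι 𝕜 E) {u : E} (hu : ‖u‖ = 1) :
    ∃ (τ : HilbertBasis ι 𝕜 E) (n : ι), τ n = u := by
  have hs : Orthonormal 𝕜 ((↑) : ({u} : Set E) → E) :=
    orthonormal_subsingleton_iff.mpr fun ⟨_, rfl⟩ => hu
  obtain ⟨w, b, hsw, hb⟩ := hs.exists_hilbertBasis_extension
  obtain ⟨τ, hτ⟩ := b₀.exists_range_eq b
  have hu_mem : u ∈ range τ := by rw [hτ, hb, Subtype.range_coe]; exact hsw rfl
  exact ⟨τ, hu_mem⟩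

end HilbertBasis

section Conjugation

variable {H : Type*} [NormedAddCommGroup H] [InnerProductSpace ℂ H]

def IsAntilinear (C : H → H) : Prop :=
  ∀ (a : ℂ) (f g : H), C (a • f + g) = conj a • C f + C g

namespace IsAntilinear

variable {C : H → H} (hC : IsAntilinear C)
include hC

theorem map_zero : C 0 = 0 := by
  simpa using hC 1 0 0

theorem map_add (x y : H) : C (x + y) = C x + C y := by
  simpa using hC 1 x y

theorem map_smul (a : ℂ) (x : H) : C (a • x) = conj a • C x := by
  simpa [hC.map_zero] using hC a x 0

theorem ext_of_forall_norm_eq_one {D : H → H} (hD : IsAntilinear D)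
    (h : ∀ u, ‖u‖ = 1 → C u = D u) : C = D := by
  funext x
  obtain rfl | hx := eq_or_ne x 0
  · rw [hC.map_zero, hD.map_zero]
  · have hxu : x = (‖x‖ : ℂ) • ((‖x‖⁻¹ : ℂ) • x) := by
      rw [smul_smul, mul_inv_cancel₀ (by simpa using hx), one_smul]
    have hu : ‖(‖x‖⁻¹ : ℂ) • x‖ = 1 := norm_smul_inv_norm hx
    rw [hxu, hC.map_smul, hD.map_smul, h _ hu]

end IsAntilinear

namespace IsConjugation

variable {C : H → H} (hC : IsConjugation C)
include hC

theorem isAntilinear : IsAntilinear C := hC.1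

theorem re_inner_map_map (x y : H) : (⟪C x, C y⟫_ℂ).re = (⟪x, y⟫_ℂ).re := by
  simp only [← RCLike.re_to_complex,
    re_inner_eq_norm_add_mul_self_sub_norm_mul_self_sub_norm_mul_self_div_two,
    ← hC.isAntilinear.map_add, hC.2.2]

theorem inner_map_map (x y : H) : ⟪C x, C y⟫_ℂ = ⟪y, x⟫_ℂ := by
  have him := hC.re_inner_map_map x (Complex.I • y)
  rw [hC.isAntilinear.map_smul, Complex.conj_I, inner_smul_right, inner_smul_right] at him
  rw [← inner_conj_symm y x]
  apply Complex.ext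
  · rw [hC.re_inner_map_map, Complex.conj_re]
  · simp only [Complex.mul_re, Complex.neg_re, Complex.neg_im, Complex.I_re, Complex.I_im] at him
    rw [Complex.conj_im]
    linarith

end IsConjugation

namespace HilbertBasis

variable {ι : Type*} (f : HilbertBasis ι ℂ H)

def conjugation (x : H) : H :=
  f.repr.symm (star (f.repr x))

@[simp]
theorem repr_conjugation (x : H) (i : ι) : f.repr (f.conjugation x) i = conj (f.repr x i) := by
  simp [conjugation]

theorem isConjugation_conjugation : IsConjugation f.conjugation := by
  refine ⟨fun a x y => ?_, fun x => ?_, fun x => ?_⟩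
  · simp only [conjugation, map_add, map_smul, star_add, star_smul]
    rfl
  · simp [conjugation]
  · rw [conjugation, f.repr.symm.norm_map, norm_star, f.repr.norm_map]

theorem inner_conjugation (x y : H) :
    ⟪y, f.conjugation x⟫_ℂ = ∑' k, ⟪x, f k⟫_ℂ * ⟪y, f k⟫_ℂ := by
  rw [← f.tsum_inner_mul_inner y (f.conjugation x)]
  congr 1 with k
  rw [mul_comm, ← f.repr_apply_apply, repr_conjugation, f.repr_apply_apply, inner_conj_symm]

end HilbertBasis

def IsFixedOrthonormal (C : H → H) (s : Set H) : Prop :=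
  Orthonormal ℂ ((↑) : s → H) ∧ ∀ x ∈ s, C x = x

namespace IsConjugation

variable {C : H → H} (hC : IsConjugation C)
include hC

theorem exists_norm_eq_one_map_eq_self {K : Submodule ℂ H} (hK : ∀ x ∈ K, C x ∈ K)
    (hK₀ : K ≠ ⊥) : ∃ w ∈ K, ‖w‖ = 1 ∧ C w = w := by
  obtain ⟨x, hxK, hx₀⟩ := K.exists_mem_ne_zero_of_ne_bot hK₀
  have hv : ∃ v ∈ K, v ≠ 0 ∧ C v = v := by
    by_cases hxC : x + C x = 0
    · refine ⟨Complex.I • x, K.smul_mem _ hxK, smul_ne_zero Complex.I_ne_zero hx₀, ?_⟩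
      rw [hC.isAntilinear.map_smul, Complex.conj_I, eq_neg_of_add_eq_zero_right hxC]
      module
    · refine ⟨x + C x, K.add_mem hxK (hK x hxK), hxC, ?_⟩
      rw [hC.isAntilinear.map_add, hC.2.1, add_comm]
  obtain ⟨v, hvK, hv₀, hCv⟩ := hv
  refine ⟨(‖v‖⁻¹ : ℂ) • v, K.smul_mem _ hvK, norm_smul_inv_norm hv₀, ?_⟩
  rw [hC.isAntilinear.map_smul, hCv, map_inv₀, Complex.conj_ofReal]

theorem map_mem_orthogonal_span {S : Set H} (hS : ∀ e ∈ S, C e = e) {y : H}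
    (hy : y ∈ (span ℂ S)ᗮ) : C y ∈ (span ℂ S)ᗮ := by
  rw [mem_orthogonal_span_iff] at hy ⊢
  intro e he
  rw [← hS e he, hC.inner_map_map, inner_eq_zero_symm.mp (hy e he)]

theorem orthogonal_span_eq_bot_of_maximal {S : Set H}
    (hS : Maximal (IsFixedOrthonormal C) S) :
    (span ℂ S)ᗮ = ⊥ := by
  by_contra hne
  obtain ⟨w, hwS, hw, hCw⟩ := hC.exists_norm_eq_one_map_eq_self
    (fun y => hC.map_mem_orthogonal_span hS.prop.2) hne
  have hwS' : ∀ e ∈ S, ⟪e, w⟫_ℂ = 0 := mem_orthogonal_span_iff.mp hwS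
  have hins : IsFixedOrthonormal C (insert w S) :=
    ⟨orthonormal_insert hS.prop.1 hw hwS', by
      rintro x (rfl | hx)
      exacts [hCw, hS.prop.2 x hx]⟩
  have hw_mem : w ∈ S := hS.eq_of_ge hins (subset_insert w S) ▸ mem_insert w S
  simpa [hw] using hwS' w hw_mem

theorem exists_hilbertBasis_map_eq_self [CompleteSpace H] [TopologicalSpace.SeparableSpace H]
    {ι : Type*} (b₀ : HilbertBasis ι ℂ H) : ∃ f : HilbertBasis ι ℂ H, ∀ i, C (f i) = f i := by
  obtain ⟨S, hS⟩ := zorn_subset {s | IsFixedOrthonormal C s}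
    fun c hc hchain => ⟨⋃₀ c,
      ⟨orthonormal_sUnion_of_directed hchain.directedOn fun s hs => (hc hs).1,
        fun x ⟨s, hs, hxs⟩ => (hc hs).2 x hxs⟩,
      fun s => subset_sUnion_of_mem⟩
  have hspan : (span ℂ (range ((↑) : S → H)))ᗮ = ⊥ := by
    rw [Subtype.range_coe]
    exact hC.orthogonal_span_eq_bot_of_maximal hS
  obtain ⟨f, hf⟩ := b₀.exists_range_eq (HilbertBasis.mkOfOrthogonalEqBot hS.prop.1 hspan)
  refine ⟨f, fun i => hS.prop.2 _ ?_⟩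
  have : f i ∈ range f := mem_range_self i
  rwa [hf, HilbertBasis.coe_mkOfOrthogonalEqBot, Subtype.range_coe] at this

theorem eq_conjugation {ι : Type*} {f : HilbertBasis ι ℂ H} (hf : ∀ i, C (f i) = f i) :
    C = f.conjugation := by
  funext x
  refine f.repr.injective (lp.ext (funext fun i => ?_))
  have h := hC.inner_map_map (f i) x
  rw [hf] at h
  rw [f.repr_conjugation, f.repr_apply_apply, f.repr_apply_apply, h, inner_conj_symm]

end IsConjugation

theorem IsAntilinear.ext_of_forall_hilbertBasis [CompleteSpace H]
    [TopologicalSpace.SeparableSpace H] {ι : Type*} (b₀ : HilbertBasis ι ℂ H) {C D : H → H}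
    (hC : IsAntilinear C) (hD : IsAntilinear D)
    (h : ∀ (τ : HilbertBasis ι ℂ H) (m n : ι), ⟪τ m, C (τ n)⟫_ℂ = ⟪τ m, D (τ n)⟫_ℂ) : C = D := by
  refine hC.ext_of_forall_norm_eq_one hD fun u hu => ?_
  obtain ⟨τ, n, rfl⟩ := b₀.exists_apply_eq hu
  exact τ.repr.injective (lp.ext (funext fun m => by simpa [τ.repr_apply_apply] using h τ m n))

end Conjugation

theorem isConjugation_iff_matrix_coefficients
    {H : Type*} [NormedAddCommGroup H] [InnerProductSpace ℂ H] [CompleteSpace H]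
    [TopologicalSpace.SeparableSpace H] {Λ : Type*}
    (b₀ : HilbertBasis Λ ℂ H)
    (C : H → H)
    (hC : ∀ (a : ℂ) (f g : H), C (a • f + g) = conj a • C f + C g) :
    IsConjugation C ↔
      ∃ f : HilbertBasis Λ ℂ H, ∀ (τ : HilbertBasis Λ ℂ H) (m n : Λ),
        ip (C (τ n)) (τ m) = ∑' k : Λ, ip (f k) (τ n) * ip (f k) (τ m) := by
  have hcoeff : ∀ f : HilbertBasis Λ ℂ H, (∀ (τ : HilbertBasis Λ ℂ H) (m n : Λ),
      ip (C (τ n)) (τ m) = ∑' k : Λ, ip (f k) (τ n) * ip (f k) (τ m)) ↔ C = f.conjugation := by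
    intro f
    simp only [ip, ← f.inner_conjugation]
    exact ⟨IsAntilinear.ext_of_forall_hilbertBasis b₀ hC f.isConjugation_conjugation.isAntilinear,
      fun h τ m n => by rw [h]⟩
  simp only [hcoeff]
  exact ⟨fun hconj => (hconj.exists_hilbertBasis_map_eq_self b₀).imp fun f => hconj.eq_conjugation,
    fun ⟨f, hf⟩ => hf ▸ f.isConjugation_conjugation⟩
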